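/- For all natural numbers n and k with 0 ≤ k ≤ n, φ(n,k,k) = 1 / (2^n · (n−k)! · k! · 3^k). -/

import Mathlib

/-- Auxiliary array realizing the triangular field `φ` on natural-number indices. -/
def phiN : ℕ → ℕ → ℕ → ℚ
  | 0, j, k => if j = 0 ∧ k = 0 then 1 else 0
  | n + 1, j, k =>
    if k ≤ j ∧ j ≤ n + 1 then
      ((if _hk : k = 0 then 0 else ((n : ℚ) + 2 - (j : ℚ)) * phiN (n + 1) (j - 1) (k - 1))
        + ((k : ℚ) + 1) * phiN n j (k + 1) + phiN n j k) / (2 * ((n : ℚ) + 1) + (k : ℚ))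
    else 0
termination_by n j k => (n, j)

/-- The triangular field `φ(n,j,k)` of rational numbers: `φ(n,j,k) = 0` unless
`0 ≤ k ≤ j ≤ n`, `φ(0,0,0) = 1`, and for `0 ≤ k ≤ j ≤ n` with `(n,j,k) ≠ (0,0,0)`,
`(2n+k)·φ(n,j,k) = (n-j+1)·φ(n,j-1,k-1) + (k+1)·φ(n-1,j,k+1) + φ(n-1,j,k)`. -/
def phi (n j k : ℤ) : ℚ :=
  if 0 ≤ n ∧ 0 ≤ j ∧ 0 ≤ k then phiN n.toNat j.toNat k.toNat else 0

/-!
Along the diagonal `j = k` the term `φ(n-1,k,k+1)` of the recurrence vanishes, leaving the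
two-term recurrence `(2n+k) φ(n,k,k) = (n-k+1) φ(n,k-1,k-1) + φ(n-1,k,k)`. The closed form,
extended by `0` for `k > n`, satisfies the same recurrence: relative to its value at `(n,k)` the two
terms on the right contribute `3k` and `2(n-k)`.
-/

open Nat

lemma phiN_eq_zero {n j k : ℕ} (h : ¬(k ≤ j ∧ j ≤ n)) : phiN n j k = 0 := by
  cases n with
  | zero =>
    rw [phiN, if_neg]
    rintro ⟨rfl, rfl⟩
    exact h ⟨le_rfl, le_rfl⟩
  | succ n => rw [phiN, if_neg h]

lemma phiN_zero_zero_zero : phiN 0 0 0 = 1 := by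
  rw [phiN]; simp

lemma phiN_succ_zero_zero (n : ℕ) : 2 * ((n : ℚ) + 1) * phiN (n + 1) 0 0 = phiN n 0 0 := by
  rw [phiN, if_pos ⟨le_rfl, Nat.zero_le _⟩, dif_pos rfl, phiN_eq_zero (by omega : ¬(1 ≤ 0 ∧ 0 ≤ n))]
  field_simp
  ring

lemma phiN_succ_succ_diag {n k : ℕ} (hk : k ≤ n) :
    (2 * ((n : ℚ) + 1) + (k + 1)) * phiN (n + 1) (k + 1) (k + 1)
      = ((n : ℚ) + 1 - k) * phiN (n + 1) k k + phiN n (k + 1) (k + 1) := by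
  rw [phiN, if_pos ⟨le_rfl, by omega⟩, dif_neg k.succ_ne_zero,
    phiN_eq_zero (by omega : ¬(k + 2 ≤ k + 1 ∧ k + 1 ≤ n))]
  field_simp
  push_cast
  ring

def phiDiag (n k : ℕ) : ℚ :=
  if k ≤ n then 1 / (2 ^ n * ((n - k)! : ℚ) * (k ! : ℚ) * 3 ^ k) else 0

lemma phiDiag_of_lt {n k : ℕ} (h : n < k) : phiDiag n k = 0 := if_neg (by omega)

lemma phiDiag_zero_zero : phiDiag 0 0 = 1 := by simp [phiDiag]

lemma phiDiag_succ_zero (n : ℕ) : 2 * ((n : ℚ) + 1) * phiDiag (n + 1) 0 = phiDiag n 0 := by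
  simp only [phiDiag, Nat.zero_le, if_true, Nat.sub_zero, Nat.factorial_succ]
  push_cast
  field_simp
  ring

lemma phiDiag_succ_succ {n k : ℕ} (hk : k ≤ n) :
    (2 * ((n : ℚ) + 1) + (k + 1)) * phiDiag (n + 1) (k + 1)
      = ((n : ℚ) + 1 - k) * phiDiag (n + 1) k + phiDiag n (k + 1) := by
  obtain ⟨m, rfl⟩ := Nat.exists_eq_add_of_le hk
  rcases m with _ | m
  · rw [phiDiag_of_lt (by omega : k + 0 < k + 1)]
    simp only [phiDiag, if_pos (by omega : k ≤ k + 0 + 1), if_pos le_rfl,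
      show k + 0 + 1 - k = 1 by omega, Nat.sub_self, Nat.factorial_succ k]
    push_cast
    field_simp
    ring
  · simp only [phiDiag, if_pos (by omega : k + 1 ≤ k + (m + 1)), if_pos (by omega : k ≤ k + (m + 1) + 1),
      if_pos (by omega : k + 1 ≤ k + (m + 1) + 1),
      show k + (m + 1) + 1 - (k + 1) = m + 1 by omega, show k + (m + 1) + 1 - k = m + 2 by omega,
      show k + (m + 1) - (k + 1) = m by omega, Nat.factorial_succ]
    push_cast
    field_simp
    ring

theorem phiN_diag_eq_phiDiag : ∀ n k : ℕ, phiN n k k = phiDiag n k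
  | 0, 0 => by rw [phiN_zero_zero_zero, phiDiag_zero_zero]
  | 0, k + 1 => by rw [phiN_eq_zero (by omega), phiDiag_of_lt (by omega)]
  | n + 1, 0 => by
    have h := phiN_succ_zero_zero n
    rw [phiN_diag_eq_phiDiag n 0, ← phiDiag_succ_zero] at h
    exact mul_left_cancel₀ (by positivity) h
  | n + 1, k + 1 => by
    rcases Nat.lt_or_ge n k with hnk | hkn
    · rw [phiN_eq_zero (by omega), phiDiag_of_lt (by omega)]
    · have h := phiN_succ_succ_diag hkn
      rw [phiN_diag_eq_phiDiag (n + 1) k, phiN_diag_eq_phiDiag n (k + 1),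
        ← phiDiag_succ_succ hkn] at h
      exact mul_left_cancel₀ (by positivity) h
termination_by n k => (n, k)

/-- `φ(n,k,k) = 1 / (2^n · (n-k)! · k! · 3^k)` for `0 ≤ k ≤ n`. -/
theorem stmt11 (n k : ℕ) (hk : k ≤ n) :
    phi (n : ℤ) (k : ℤ) (k : ℤ)
      = 1 / (2 ^ n * (Nat.factorial (n - k) : ℚ) * (Nat.factorial k : ℚ) * 3 ^ k) := by
  rw [phi, if_pos ⟨n.cast_nonneg, k.cast_nonneg, k.cast_nonneg⟩]
  simp only [Int.toNat_natCast]
  rw [phiN_diag_eq_phiDiag, phiDiag, if_pos hk]
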